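/- There exists a constant C > 0 such that for every integer n ≥ 1 and all b, b' ∈ (0,1), |f_n(b) − f_n(b')| ≤ C |b − b'| / n, where f_n(b) = ( J_{n−1}(b) − b^{2n} J_{n+1}(b) ) / ( J_{n−1}(b) + b^{2n} J_{n+1}(b) ). -/

import Mathlib

open Real Set

/-- Bessel function of the first kind of integer order, via the Poisson integral
representation. -/
noncomputable def besselJ (n : ℕ) (r : ℝ) : ℝ :=
  r ^ n / (2 ^ n * Real.Gamma ((n : ℝ) + 1 / 2) * Real.sqrt Real.pi) *
    ∫ t in (-1 : ℝ)..1, Real.cos (r * t) * (1 - t ^ 2) ^ ((n : ℝ) - 1 / 2)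

/-- `f_n(b) = c_n(b,1)/n`, the normalized `n`-th eigenvalue of the Dirichlet-to-Neumann
map for the one-step radial potential `q = χ_{(0,b)}(|x|)` on the unit disk. -/
noncomputable def fEig (n : ℕ) (b : ℝ) : ℝ :=
  (besselJ (n - 1) b - b ^ (2 * n) * besselJ (n + 1) b) /
    (besselJ (n - 1) b + b ^ (2 * n) * besselJ (n + 1) b)

/-!
Through the Poisson integral `P_s(b) = ∫_{-1}^{1} cos (b t) (1 - t²)^s dt`, one has
`f_n = (1 - x_n) / (1 + x_n)` with
`x_n(b) = b^{2n} J_{n+1}(b) / J_{n-1}(b) = b^{2n+2} P_{n+1/2}(b) / ((2n-1)(2n+1) P_{n-3/2}(b))`,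
the factor `(2n-1)(2n+1)` coming from `Γ(n + 3/2) = (n + 1/2)(n - 1/2) Γ(n - 1/2)`.
For `|b| ≤ 1` we have `cos (b t) ≥ cos 1 > 0`, so `P_s(b)` lies between `cos 1 · P_s(0)` and
`P_s(0)` and is `P_s(0)`-Lipschitz; since `P_s(0)` decreases in `s`, the ratio
`P_{n+1/2} / P_{n-3/2}` is bounded and Lipschitz uniformly in `n`. The weight `b^{2n+2}` has
Lipschitz constant `2n + 2`, so `x_n` is `O(n / n²) = O(1 / n)`-Lipschitz, and
`x ↦ (1 - x) / (1 + x)` is `2`-Lipschitz on `[0, ∞)`.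
-/

open MeasureTheory intervalIntegral

lemma abs_div_sub_div_le {x x' y y' : ℝ} (hx : 0 < x) (hx' : 0 < x') :
    |y / x - y' / x'| ≤ (|y| * |x - x'| + |x| * |y - y'|) / (x * x') := by
  have h : y / x - y' / x' = (y * (x' - x) + x * (y - y')) / (x * x') := by
    field_simp
    ring
  rw [h, abs_div, abs_of_pos (mul_pos hx hx'), abs_sub_comm x]
  gcongr
  refine (abs_add_le _ _).trans_eq ?_
  rw [abs_mul, abs_mul]

lemma abs_one_sub_div_one_add_sub_le {x y : ℝ} (hx : 0 ≤ x) (hy : 0 ≤ y) :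
    |(1 - x) / (1 + x) - (1 - y) / (1 + y)| ≤ 2 * |x - y| := by
  have hxy : 1 ≤ (1 + x) * (1 + y) := one_le_mul_of_one_le_of_one_le (by linarith) (by linarith)
  have h : (1 - x) / (1 + x) - (1 - y) / (1 + y) = 2 * (y - x) / ((1 + x) * (1 + y)) := by
    field_simp
    ring
  rw [h, abs_div, abs_mul, abs_two, abs_sub_comm y,
    abs_of_pos (show 0 < (1 + x) * (1 + y) by linarith)]
  exact div_le_self (by positivity) hxy

lemma intervalIntegrable_one_sub_sq_rpow {s : ℝ} (hs : -1 < s) :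
    IntervalIntegrable (fun t : ℝ => (1 - t ^ 2) ^ s) volume (-1) 1 := by
  rcases le_or_gt 0 s with hs0 | hs0
  · exact ((continuous_const.sub (continuous_pow 2)).rpow_const
      fun _ => Or.inr hs0).intervalIntegrable _ _
  have hleft : IntervalIntegrable (fun t : ℝ => (1 - t) ^ s) volume (-1) 1 := by
    have := (intervalIntegrable_rpow' (a := 2) (b := 0) hs).comp_sub_left 1
    norm_num at this
    exact this
  have hright : IntervalIntegrable (fun t : ℝ => (1 + t) ^ s) volume (-1) 1 := by
    have := (intervalIntegrable_rpow' (a := 0) (b := 2) hs).comp_add_left 1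
    norm_num at this
    exact this
  refine (hleft.add hright).mono_fun'
    (by fun_prop : Measurable fun t : ℝ => (1 - t ^ 2) ^ s).aestronglyMeasurable ?_
  rw [uIoc_of_le (by norm_num)]
  refine (ae_restrict_iff' measurableSet_Ioc).mpr (.of_forall fun t ht => ?_)
  have h₁ : 0 ≤ 1 - t := by linarith [ht.2]
  have h₂ : 0 ≤ 1 + t := by linarith [ht.1]
  have hfac : 1 - t ^ 2 = (1 - t) * (1 + t) := by ring
  simp only [norm_eq_abs, hfac, mul_rpow h₁ h₂,
    abs_of_nonneg (mul_nonneg (rpow_nonneg h₁ s) (rpow_nonneg h₂ s))]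
  -- as `s < 0`, the factor with base `≥ 1` is `≤ 1`, so the product is at most the sum
  rcases le_total 0 t with ht0 | ht0
  · have : (1 + t) ^ s ≤ 1 := rpow_le_one_of_one_le_of_nonpos (by linarith) hs0.le
    nlinarith [rpow_nonneg h₁ s, rpow_nonneg h₂ s]
  · have : (1 - t) ^ s ≤ 1 := rpow_le_one_of_one_le_of_nonpos (by linarith) hs0.le
    nlinarith [rpow_nonneg h₁ s, rpow_nonneg h₂ s]

lemma intervalIntegrable_cos_mul_one_sub_sq_rpow {s : ℝ} (hs : -1 < s) (b : ℝ) :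
    IntervalIntegrable (fun t : ℝ => cos (b * t) * (1 - t ^ 2) ^ s) volume (-1) 1 := by
  refine (intervalIntegrable_one_sub_sq_rpow hs).mono_fun (by fun_prop)
    (.of_forall fun t => ?_)
  simp only [norm_mul]
  exact mul_le_of_le_one_left (norm_nonneg _) (abs_cos_le_one _)

noncomputable def besselPoisson (s b : ℝ) : ℝ :=
  ∫ t in (-1 : ℝ)..1, cos (b * t) * (1 - t ^ 2) ^ s

section besselPoisson

variable {s s₁ s₂ b b' : ℝ}

lemma besselPoisson_zero (s : ℝ) : besselPoisson s 0 = ∫ t in (-1 : ℝ)..1, (1 - t ^ 2) ^ s := by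
  simp [besselPoisson]

lemma besselPoisson_zero_pos (hs : -1 < s) : 0 < besselPoisson s 0 := by
  rw [besselPoisson_zero]
  refine intervalIntegral_pos_of_pos_on (intervalIntegrable_one_sub_sq_rpow hs)
    (fun t ht => rpow_pos_of_pos ?_ _) (by norm_num)
  nlinarith [ht.1, ht.2]

lemma besselPoisson_zero_le_of_le (hs₁ : -1 < s₁) (h : s₁ ≤ s₂) :
    besselPoisson s₂ 0 ≤ besselPoisson s₁ 0 := by
  rw [besselPoisson_zero, besselPoisson_zero]
  refine integral_mono_on_of_le_Ioo (by norm_num)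
    (intervalIntegrable_one_sub_sq_rpow (hs₁.trans_le h))
    (intervalIntegrable_one_sub_sq_rpow hs₁) fun t ht => ?_
  exact rpow_le_rpow_of_exponent_ge (by nlinarith [ht.1, ht.2]) (by nlinarith) h

lemma besselPoisson_le_besselPoisson_zero (hs : -1 < s) (b : ℝ) :
    besselPoisson s b ≤ besselPoisson s 0 := by
  rw [besselPoisson_zero]
  refine integral_mono_on (by norm_num) (intervalIntegrable_cos_mul_one_sub_sq_rpow hs b)
    (intervalIntegrable_one_sub_sq_rpow hs) fun t ht => ?_
  exact mul_le_of_le_one_left (rpow_nonneg (by nlinarith [ht.1, ht.2]) _) (cos_le_one _)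

lemma cos_one_mul_besselPoisson_zero_le (hs : -1 < s) (hb : |b| ≤ 1) :
    cos 1 * besselPoisson s 0 ≤ besselPoisson s b := by
  rw [besselPoisson_zero, ← intervalIntegral.integral_const_mul]
  refine integral_mono_on (by norm_num) ((intervalIntegrable_one_sub_sq_rpow hs).const_mul _)
    (intervalIntegrable_cos_mul_one_sub_sq_rpow hs b) fun t ht => ?_
  have hbt : |b * t| ≤ 1 := by
    rw [abs_mul]
    exact mul_le_one₀ hb (abs_nonneg t) (abs_le.mpr ht)
  have hcos : cos 1 ≤ cos (b * t) := by
    rw [← cos_abs (b * t)]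
    exact cos_le_cos_of_nonneg_of_le_pi (abs_nonneg _) (by linarith [pi_gt_three]) hbt
  exact mul_le_mul_of_nonneg_right hcos (rpow_nonneg (by nlinarith [ht.1, ht.2]) _)

lemma besselPoisson_pos (hs : -1 < s) (hb : |b| ≤ 1) : 0 < besselPoisson s b :=
  (mul_pos cos_one_pos (besselPoisson_zero_pos hs)).trans_le
    (cos_one_mul_besselPoisson_zero_le hs hb)

lemma abs_besselPoisson_sub_le (hs : -1 < s) (b b' : ℝ) :
    |besselPoisson s b - besselPoisson s b'| ≤ |b - b'| * besselPoisson s 0 := by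
  have hb := intervalIntegrable_cos_mul_one_sub_sq_rpow hs b
  have hb' := intervalIntegrable_cos_mul_one_sub_sq_rpow hs b'
  rw [besselPoisson, besselPoisson, ← integral_sub hb hb', besselPoisson_zero,
    ← intervalIntegral.integral_const_mul]
  refine (abs_integral_le_integral_abs (by norm_num)).trans <|
    integral_mono_on (by norm_num) (hb.sub hb').abs
      ((intervalIntegrable_one_sub_sq_rpow hs).const_mul _) fun t ht => ?_
  have hw : 0 ≤ (1 - t ^ 2) ^ s := rpow_nonneg (by nlinarith [ht.1, ht.2]) _
  have hcos : |cos (b * t) - cos (b' * t)| ≤ |b - b'| := by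
    refine (abs_cos_sub_cos_le _ _).trans ?_
    rw [← sub_mul, abs_mul]
    exact mul_le_of_le_one_right (abs_nonneg _) (abs_le.mpr ht)
  rw [← sub_mul, abs_mul, abs_of_nonneg hw]
  exact mul_le_mul_of_nonneg_right hcos hw

lemma besselPoisson_div_le (hs₁ : -1 < s₁) (h : s₁ ≤ s₂) (hb : |b| ≤ 1) :
    besselPoisson s₂ b / besselPoisson s₁ b ≤ 1 / cos 1 := by
  have hs₂ : -1 < s₂ := hs₁.trans_le h
  rw [div_le_div_iff₀ (besselPoisson_pos hs₁ hb) cos_one_pos, one_mul, mul_comm]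
  calc cos 1 * besselPoisson s₂ b ≤ cos 1 * besselPoisson s₂ 0 := by
        gcongr
        · exact cos_one_pos.le
        · exact besselPoisson_le_besselPoisson_zero hs₂ b
    _ ≤ cos 1 * besselPoisson s₁ 0 :=
        mul_le_mul_of_nonneg_left (besselPoisson_zero_le_of_le hs₁ h) cos_one_pos.le
    _ ≤ besselPoisson s₁ b := cos_one_mul_besselPoisson_zero_le hs₁ hb

lemma abs_besselPoisson_div_sub_le (hs₁ : -1 < s₁) (h : s₁ ≤ s₂) (hb : |b| ≤ 1)
    (hb' : |b'| ≤ 1) :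
    |besselPoisson s₂ b / besselPoisson s₁ b - besselPoisson s₂ b' / besselPoisson s₁ b'| ≤
      2 / cos 1 ^ 2 * |b - b'| := by
  have hs₂ : -1 < s₂ := hs₁.trans_le h
  set W₁ := besselPoisson s₁ 0
  set W₂ := besselPoisson s₂ 0
  have hW₁ : 0 < W₁ := besselPoisson_zero_pos hs₁
  have hP₁ : 0 < besselPoisson s₁ b := besselPoisson_pos hs₁ hb
  have hP₂ : 0 < besselPoisson s₂ b := besselPoisson_pos hs₂ hb
  have hlow : cos 1 * W₁ ≤ besselPoisson s₁ b := cos_one_mul_besselPoisson_zero_le hs₁ hb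
  have hlow' : cos 1 * W₁ ≤ besselPoisson s₁ b' := cos_one_mul_besselPoisson_zero_le hs₁ hb'
  have hnum : |besselPoisson s₂ b| * |besselPoisson s₁ b - besselPoisson s₁ b'| +
      |besselPoisson s₁ b| * |besselPoisson s₂ b - besselPoisson s₂ b'| ≤
      2 * |b - b'| * W₁ ^ 2 := by
    rw [abs_of_pos hP₁, abs_of_pos hP₂]
    have h₁ := abs_besselPoisson_sub_le hs₁ b b'
    have h₂ := abs_besselPoisson_sub_le hs₂ b b'
    have hP₂W : besselPoisson s₂ b ≤ W₁ :=
      (besselPoisson_le_besselPoisson_zero hs₂ b).trans (besselPoisson_zero_le_of_le hs₁ h)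
    have hP₁W : besselPoisson s₁ b ≤ W₁ := besselPoisson_le_besselPoisson_zero hs₁ b
    have hW₂ : W₂ ≤ W₁ := besselPoisson_zero_le_of_le hs₁ h
    calc _ ≤ W₁ * (|b - b'| * W₁) + W₁ * (|b - b'| * W₁) := by
          gcongr
          exact h₂.trans (by gcongr)
      _ = 2 * |b - b'| * W₁ ^ 2 := by ring
  calc _ ≤ _ := abs_div_sub_div_le hP₁ (besselPoisson_pos hs₁ hb')
    _ ≤ 2 * |b - b'| * W₁ ^ 2 / ((cos 1 * W₁) * (cos 1 * W₁)) := by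
        have := mul_pos cos_one_pos hW₁
        gcongr
    _ = 2 / cos 1 ^ 2 * |b - b'| := by
        field_simp [hW₁.ne', cos_one_pos.ne']

end besselPoisson

lemma besselJ_eq_besselPoisson (n : ℕ) (b : ℝ) :
    besselJ n b = b ^ n / (2 ^ n * Gamma (n + 1 / 2) * √π) * besselPoisson (n - 1 / 2) b :=
  rfl

lemma besselJ_pos (n : ℕ) {b : ℝ} (hb₀ : 0 < b) (hb₁ : b ≤ 1) : 0 < besselJ n b := by
  rw [besselJ_eq_besselPoisson]
  exact mul_pos (by positivity) (besselPoisson_pos (by linarith [n.cast_nonneg (α := ℝ)])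
    (by rwa [abs_of_pos hb₀]))

lemma besselJ_add_two_div (m : ℕ) {b : ℝ} (hb : b ≠ 0) :
    besselJ (m + 2) b / besselJ m b =
      b ^ 2 / ((2 * m + 1) * (2 * m + 3)) *
        (besselPoisson (m + 3 / 2) b / besselPoisson (m - 1 / 2) b) := by
  have hΓ : Gamma ((m + 2 : ℕ) + 1 / 2) = (m + 3 / 2) * ((m + 1 / 2) * Gamma (m + 1 / 2)) := by
    rw [show ((m + 2 : ℕ) : ℝ) + 1 / 2 = m + 1 / 2 + 1 + 1 by push_cast; ring,
      Gamma_add_one (by positivity), Gamma_add_one (by positivity)]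
    ring
  have hnum : besselJ (m + 2) b = b ^ m / (2 ^ m * Gamma (m + 1 / 2) * √π) *
      (b ^ 2 / ((2 * m + 1) * (2 * m + 3)) * besselPoisson (m + 3 / 2) b) := by
    rw [besselJ_eq_besselPoisson, hΓ, show ((m + 2 : ℕ) : ℝ) - 1 / 2 = m + 3 / 2 by
      push_cast; ring]
    field_simp
    ring
  rw [hnum, besselJ_eq_besselPoisson, mul_div_mul_left _ _ (by positivity), mul_div_assoc]

/-- `b ^ (2 m + 2) * J_{m+2}(b) / J_m(b)`, the `x` with `f_{m+1}(b) = (1 - x) / (1 + x)`. -/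
noncomputable def besselQuot (m : ℕ) (b : ℝ) : ℝ :=
  b ^ (2 * m + 4) / ((2 * m + 1) * (2 * m + 3)) *
    (besselPoisson (m + 3 / 2) b / besselPoisson (m - 1 / 2) b)

section besselQuot

variable {m : ℕ} {b b' : ℝ}

lemma fEig_succ_eq (hb₀ : 0 < b) (hb₁ : b ≤ 1) :
    fEig (m + 1) b = (1 - besselQuot m b) / (1 + besselQuot m b) := by
  have hJ := besselJ_pos m hb₀ hb₁
  have hquot : b ^ (2 * (m + 1)) * besselJ (m + 2) b / besselJ m b = besselQuot m b := by
    rw [mul_div_assoc, besselJ_add_two_div m hb₀.ne', besselQuot]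
    ring
  rw [fEig, Nat.add_sub_cancel, ← hquot]
  field_simp

lemma besselQuot_nonneg (hb : |b| ≤ 1) : 0 ≤ besselQuot m b := by
  have hm : (0 : ℝ) ≤ m := m.cast_nonneg
  have hP₁ := besselPoisson_pos (s := m - 1 / 2) (by linarith) hb
  have hP₂ := besselPoisson_pos (s := m + 3 / 2) (by linarith) hb
  have hw : 0 ≤ b ^ (2 * m + 4) := Even.pow_nonneg ⟨m + 2, by ring⟩ b
  unfold besselQuot
  positivity

lemma abs_besselQuot_sub_le (hb : |b| ≤ 1) (hb' : |b'| ≤ 1) :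
    |besselQuot m b - besselQuot m b'| ≤
      (2 * m + 6) / (cos 1 ^ 2 * ((2 * m + 1) * (2 * m + 3))) * |b - b'| := by
  have hm : (0 : ℝ) ≤ m := m.cast_nonneg
  have hc := cos_one_pos
  set K : ℝ := (2 * m + 1) * (2 * m + 3)
  have hK : 0 < K := by positivity
  set ρ := fun x => besselPoisson (m + 3 / 2) x / besselPoisson (m - 1 / 2) x
  have hρ : ρ b ≤ 1 / cos 1 ^ 2 := (besselPoisson_div_le (by linarith) (by linarith) hb).trans
    (one_div_le_one_div_of_le (by positivity) (by nlinarith [cos_le_one 1]))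
  have hρ' : 0 ≤ ρ b :=
    div_nonneg (besselPoisson_pos (by linarith) hb).le (besselPoisson_pos (by linarith) hb).le
  have hρlip : |ρ b - ρ b'| ≤ 2 / cos 1 ^ 2 * |b - b'| :=
    abs_besselPoisson_div_sub_le (by linarith) (by linarith) hb hb'
  have hw : |b ^ (2 * m + 4) - b' ^ (2 * m + 4)| ≤ |b - b'| * (2 * m + 4) := by
    refine (abs_pow_sub_pow_le _ _ _).trans ?_
    push_cast
    exact mul_le_of_le_one_right (by positivity) (pow_le_one₀ (by positivity) (max_le hb hb'))
  have hw' : |b' ^ (2 * m + 4)| ≤ 1 := by rw [abs_pow]; exact pow_le_one₀ (abs_nonneg _) hb'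
  have hsplit : besselQuot m b - besselQuot m b' =
      ((b ^ (2 * m + 4) - b' ^ (2 * m + 4)) * ρ b + b' ^ (2 * m + 4) * (ρ b - ρ b')) / K := by
    simp only [besselQuot, ρ, K]
    ring
  rw [hsplit, abs_div, abs_of_pos hK, div_le_iff₀ hK]
  calc _ ≤ |b - b'| * (2 * m + 4) * (1 / cos 1 ^ 2) + 1 * (2 / cos 1 ^ 2 * |b - b'|) := by
        refine (abs_add_le _ _).trans ?_
        rw [abs_mul, abs_mul, abs_of_nonneg hρ']
        gcongr
    _ = _ := by
        field_simp
        ring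

end besselQuot

theorem fEig_lipschitz :
    ∃ C > 0, ∀ n : ℕ, 1 ≤ n → ∀ b ∈ Set.Ioo (0 : ℝ) 1, ∀ b' ∈ Set.Ioo (0 : ℝ) 1,
      |fEig n b - fEig n b'| ≤ C * |b - b'| / n := by
  refine ⟨4 / cos 1 ^ 2, by have := cos_one_pos; positivity, ?_⟩
  rintro n hn b ⟨hb₀, hb₁⟩ b' ⟨hb₀', hb₁'⟩
  obtain ⟨m, rfl⟩ := Nat.exists_eq_add_of_le' hn
  have hb : |b| ≤ 1 := by rw [abs_of_pos hb₀]; exact hb₁.le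
  have hb' : |b'| ≤ 1 := by rw [abs_of_pos hb₀']; exact hb₁'.le
  have hm : (0 : ℝ) ≤ m := m.cast_nonneg
  rw [fEig_succ_eq hb₀ hb₁.le, fEig_succ_eq hb₀' hb₁'.le]
  calc _ ≤ 2 * |besselQuot m b - besselQuot m b'| :=
        abs_one_sub_div_one_add_sub_le (besselQuot_nonneg hb) (besselQuot_nonneg hb')
    _ ≤ 2 * ((2 * m + 6) / (cos 1 ^ 2 * ((2 * m + 1) * (2 * m + 3))) * |b - b'|) := by
        gcongr
        exact abs_besselQuot_sub_le hb hb'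
    _ = 2 * (2 * m + 6) / ((2 * m + 1) * (2 * m + 3)) * (|b - b'| / cos 1 ^ 2) := by
        field_simp
    _ ≤ 4 / (m + 1) * (|b - b'| / cos 1 ^ 2) := by
        refine mul_le_mul_of_nonneg_right ?_ (by positivity)
        rw [div_le_div_iff₀ (by positivity) (by positivity)]
        nlinarith
    _ = 4 / cos 1 ^ 2 * |b - b'| / (m + 1 : ℕ) := by
        push_cast
        ring
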